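/- arXiv:2003.03910 — 2 statements merged into one kernel-verified Lean document; each statement's English description precedes it below -/
import Mathlib

section
/- Let M be a real n×n matrix, (z_j)_{j≥0} ⊂ ℝⁿ, and for j ≥ 1 set v_j = z_j − z_{j−1} and f_j = v_{j+1} − M v_j. Fix q ≥ 1 and k ≥ q + 1; let V_k be the n×q matrix with columns v_k, v_{k−1}, …, v_{k−q+1}, let F_{k−1} be the n×q matrix with columns f_{k−1}, …, f_{k−q}, let c ∈ ℝ^q, C = H(c), and E₀ = V_{k−1} C − V_k. For s ≥ 1 define the extrapolated point z̄_{k,s} = z_k + Σ_{i=1}^{s} (first column of V_k C^i). Then for every z* ∈ ℝⁿ: ‖z̄_{k,s} − z*‖ ≤ ‖M^s (z_k − z*)‖ + ‖Σ_{ℓ=0}^{s−1} M^ℓ‖ · ‖M(z_{k−1} − z*) − (z_k − z*)‖ + Σ_{ℓ=1}^{s} ‖M^ℓ‖ · ‖first column of E₀ (Σ_{i=0}^{s−ℓ} C^i)‖ + Σ_{ℓ=0}^{s−1} ‖M^ℓ‖ · ‖first column of F_{k−1} (Σ_{i=1}^{s−ℓ} C^i)‖. -/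
open Matrix

/-- The Euclidean norm on `ℝⁿ` (realized as `Fin n → ℝ`). -/
noncomputable def euclNorm {n : ℕ} (x : Fin n → ℝ) : ℝ := Real.sqrt (∑ i, x i ^ 2)

/-- The operator norm of a matrix, induced by the Euclidean norm. -/
noncomputable def matOpNorm {n : ℕ} (A : Matrix (Fin n) (Fin n) ℝ) : ℝ :=
  ‖Matrix.toEuclideanCLM (𝕜 := ℝ) A‖

/-- The companion-type matrix `H(c)`: first column `c`, and the `(i,j)` entry for `j ≥ 2`
equals `1` if `i = j − 1` and `0` otherwise. -/
def Hmat {q : ℕ} (c : Fin q → ℝ) : Matrix (Fin q) (Fin q) ℝ :=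
  Matrix.of fun i j => if (j : ℕ) = 0 then c i else if (i : ℕ) + 1 = (j : ℕ) then 1 else 0

lemma euclNorm_eq_norm {n : ℕ} (x : Fin n → ℝ) :
    euclNorm x = ‖(WithLp.equiv 2 (Fin n → ℝ)).symm x‖ := by
  simp [euclNorm, EuclideanSpace.norm_eq, Real.norm_eq_abs, sq_abs]

lemma euclNorm_add_le {n : ℕ} (x y : Fin n → ℝ) :
    euclNorm (x + y) ≤ euclNorm x + euclNorm y := by
  simp only [euclNorm_eq_norm]
  exact norm_add_le ((WithLp.equiv 2 (Fin n → ℝ)).symm x) ((WithLp.equiv 2 (Fin n → ℝ)).symm y)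

lemma euclNorm_neg {n : ℕ} (x : Fin n → ℝ) : euclNorm (-x) = euclNorm x := by
  simp [euclNorm, neg_sq]

lemma euclNorm_sum_le {n : ℕ} {ι : Type*} (S : Finset ι) (g : ι → (Fin n → ℝ)) :
    euclNorm (∑ i ∈ S, g i) ≤ ∑ i ∈ S, euclNorm (g i) := by
  classical
  induction S using Finset.cons_induction with
  | empty => simp [euclNorm]
  | cons a S ha ih =>
      rw [Finset.sum_cons, Finset.sum_cons]
      exact (euclNorm_add_le _ _).trans (by linarith)

lemma euclNorm_mulVec_le {n : ℕ} (A : Matrix (Fin n) (Fin n) ℝ) (x : Fin n → ℝ) :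
    euclNorm (A.mulVec x) ≤ matOpNorm A * euclNorm x := by
  rw [euclNorm_eq_norm, euclNorm_eq_norm]
  have h : (WithLp.equiv 2 (Fin n → ℝ)).symm (A.mulVec x) =
      Matrix.toEuclideanCLM (𝕜 := ℝ) A ((WithLp.equiv 2 (Fin n → ℝ)).symm x) := by
    exact (Matrix.toEuclideanCLM_toLp A x).symm
  rw [h]
  exact ContinuousLinearMap.le_opNorm _ _

lemma sum_Icc_one_eq_range {α : Type*} [AddCommMonoid α] (f : ℕ → α) (s : ℕ) :
    ∑ t ∈ Finset.Icc 1 s, f t = ∑ i ∈ Finset.range s, f (1 + i) := by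
  rw [← Finset.Ico_add_one_right_eq_Icc, Finset.sum_Ico_eq_sum_range]
  simp

lemma swapE {α : Type*} [AddCommMonoid α] (A : ℕ → ℕ → α) (s : ℕ) :
    ∑ t ∈ Finset.Icc 1 s, ∑ j ∈ Finset.range t, A (j + 1) (t - 1 - j)
      = ∑ ℓ ∈ Finset.Icc 1 s, ∑ i ∈ Finset.range (s - ℓ + 1), A ℓ i := by
  induction s with
  | zero => simp
  | succ s ih =>
      rw [Finset.sum_Icc_succ_top (by omega), ih,
        Finset.sum_Icc_succ_top (show 1 ≤ s + 1 by omega)]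
      have h1 : ∀ ℓ ∈ Finset.Icc 1 s,
          ∑ i ∈ Finset.range (s + 1 - ℓ + 1), A ℓ i
            = ∑ i ∈ Finset.range (s - ℓ + 1), A ℓ i + A ℓ (s - ℓ + 1) := by
        intro ℓ hℓ
        rw [Finset.mem_Icc] at hℓ
        rw [show s + 1 - ℓ + 1 = (s - ℓ + 1) + 1 by omega, Finset.sum_range_succ]
      rw [Finset.sum_congr rfl h1, Finset.sum_add_distrib]
      have h2 : ∑ j ∈ Finset.range (s + 1), A (j + 1) (s + 1 - 1 - j)
          = ∑ ℓ ∈ Finset.Icc 1 s, A ℓ (s - ℓ + 1) + A (s + 1) 0 := by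
        rw [Finset.sum_range_succ]
        congr 1
        · rw [sum_Icc_one_eq_range]
          refine Finset.sum_congr rfl fun i hi => ?_
          rw [Finset.mem_range] at hi
          congr 1 <;> omega
        · congr 1
          omega
      rw [h2, show s + 1 - (s + 1) + 1 = 1 by omega, Finset.sum_range_one]
      abel

lemma swapF {α : Type*} [AddCommMonoid α] (A : ℕ → ℕ → α) (s : ℕ) :
    ∑ t ∈ Finset.Icc 1 s, ∑ j ∈ Finset.range t, A j (t - j)
      = ∑ ℓ ∈ Finset.range s, ∑ i ∈ Finset.Icc 1 (s - ℓ), A ℓ i := by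
  induction s with
  | zero => simp
  | succ s ih =>
      rw [Finset.sum_Icc_succ_top (by omega), ih, Finset.sum_range_succ,
        Finset.sum_range_succ]
      have h1 : ∀ ℓ ∈ Finset.range s,
          ∑ i ∈ Finset.Icc 1 (s + 1 - ℓ), A ℓ i
            = ∑ i ∈ Finset.Icc 1 (s - ℓ), A ℓ i + A ℓ (s + 1 - ℓ) := by
        intro ℓ hℓ
        rw [Finset.mem_range] at hℓ
        rw [show s + 1 - ℓ = (s - ℓ) + 1 by omega, Finset.sum_Icc_succ_top (by omega)]
      rw [Finset.sum_congr rfl h1, Finset.sum_add_distrib,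
        show s + 1 - s = 1 by omega, Finset.Icc_self, Finset.sum_singleton]
      abel

/-- Prediction-error bound for the trajectory-following linear prediction `z̄_{k,s}`
(Theorem on the prediction error of A²FoM). -/
theorem linear_prediction_error_bound
    (n q : ℕ) (hq : 1 ≤ q) (M : Matrix (Fin n) (Fin n) ℝ)
    (z v f : ℕ → (Fin n → ℝ))
    (hv : ∀ j, 1 ≤ j → v j = z j - z (j - 1))
    (hf : ∀ j, 1 ≤ j → f j = v (j + 1) - M.mulVec (v j))
    (k : ℕ) (hk : q + 1 ≤ k)
    (Vmat : ℕ → Matrix (Fin n) (Fin q) ℝ)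
    (hVmat : ∀ (m : ℕ) (i : Fin n) (j : Fin q), Vmat m i j = v (m - (j : ℕ)) i)
    (Fmat : Matrix (Fin n) (Fin q) ℝ)
    (hFmat : ∀ (i : Fin n) (j : Fin q), Fmat i j = f (k - 1 - (j : ℕ)) i)
    (c : Fin q → ℝ) (C : Matrix (Fin q) (Fin q) ℝ) (hC : C = Hmat c)
    (E₀ : Matrix (Fin n) (Fin q) ℝ) (hE₀ : E₀ = Vmat (k - 1) * C - Vmat k)
    (s : ℕ) (hs : 1 ≤ s)
    (zbar : Fin n → ℝ)
    (hzbar : zbar = z k + ∑ t ∈ Finset.Icc 1 s, (fun i => (Vmat k * C ^ t) i (⟨0, hq⟩ : Fin q)))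
    (zstar : Fin n → ℝ) :
    euclNorm (zbar - zstar) ≤
      euclNorm ((M ^ s).mulVec (z k - zstar))
      + matOpNorm (∑ ℓ ∈ Finset.range s, M ^ ℓ)
          * euclNorm (M.mulVec (z (k - 1) - zstar) - (z k - zstar))
      + ∑ ℓ ∈ Finset.Icc 1 s, matOpNorm (M ^ ℓ)
          * euclNorm (fun i => (E₀ * ∑ t ∈ Finset.range (s - ℓ + 1), C ^ t) i (⟨0, hq⟩ : Fin q))
      + ∑ ℓ ∈ Finset.range s, matOpNorm (M ^ ℓ)
          * euclNorm (fun i => (Fmat * ∑ t ∈ Finset.Icc 1 (s - ℓ), C ^ t) i (⟨0, hq⟩ : Fin q)) := by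
  set e0 : Fin q := (⟨0, hq⟩ : Fin q) with he0
  have hkpos : 1 ≤ k := by omega
  -- structural matrix identities
  have MV : M * Vmat (k - 1) = Vmat k - Fmat := by
    ext i j
    have hj : (j : ℕ) < q := j.2
    have hj1 : (1 : ℕ) ≤ k - 1 - (j : ℕ) := by omega
    have hf' := hf (k - 1 - (j : ℕ)) hj1
    have hidx : k - 1 - (j : ℕ) + 1 = k - (j : ℕ) := by omega
    rw [hidx] at hf'
    simp only [Matrix.sub_apply, Matrix.mul_apply, hVmat, hFmat, hf', Pi.sub_apply,
      Matrix.mulVec, dotProduct]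
    ring
  have VC : Vmat (k - 1) * C = Vmat k + E₀ := by rw [hE₀]; abel
  have hVk : Vmat k = M * Vmat (k - 1) + Fmat := by rw [MV]; abel
  -- key expansion of Vmat k * C ^ t
  have key : ∀ t : ℕ, Vmat k * C ^ t
      = M ^ t * Vmat k
        + ∑ j ∈ Finset.range t, M ^ (j + 1) * E₀ * C ^ (t - 1 - j)
        + ∑ j ∈ Finset.range t, M ^ j * Fmat * C ^ (t - j) := by
    intro t
    induction t with
    | zero => simp
    | succ t ih =>
        have hstep : Vmat k * C ^ (t + 1)
            = M * (Vmat k * C ^ t) + M * (E₀ * C ^ t) + Fmat * C ^ (t + 1) := by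
          conv_lhs => rw [hVk]
          rw [Matrix.add_mul, pow_succ' C t, ← Matrix.mul_assoc (M * Vmat (k - 1)) C (C ^ t),
            Matrix.mul_assoc M (Vmat (k - 1)) C, VC, Matrix.mul_assoc, Matrix.add_mul,
            Matrix.mul_add]
        have hE' : ∑ j ∈ Finset.range (t + 1), M ^ (j + 1) * E₀ * C ^ (t + 1 - 1 - j)
            = M * (E₀ * C ^ t) + ∑ j ∈ Finset.range t, M * (M ^ (j + 1) * E₀ * C ^ (t - 1 - j)) := by
          rw [Finset.sum_range_succ']
          simp only [Nat.add_sub_cancel, Nat.sub_zero, zero_add, pow_one]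
          rw [add_comm]
          congr 1
          · rw [Matrix.mul_assoc]
          · refine Finset.sum_congr rfl fun j hj => ?_
            rw [show t - (j + 1) = t - 1 - j by omega, pow_succ' M (j + 1),
              Matrix.mul_assoc, Matrix.mul_assoc, Matrix.mul_assoc]
        have hF' : ∑ j ∈ Finset.range (t + 1), M ^ j * Fmat * C ^ (t + 1 - j)
            = Fmat * C ^ (t + 1) + ∑ j ∈ Finset.range t, M * (M ^ j * Fmat * C ^ (t - j)) := by
          rw [Finset.sum_range_succ']
          simp only [Nat.succ_sub_succ, Nat.sub_zero, pow_zero, Matrix.one_mul]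
          rw [add_comm]
          congr 1
          refine Finset.sum_congr rfl fun j hj => ?_
          rw [pow_succ' M j, Matrix.mul_assoc, Matrix.mul_assoc, Matrix.mul_assoc]
        rw [hstep, ih, Matrix.mul_add, Matrix.mul_add, Matrix.mul_sum, Matrix.mul_sum, hE', hF',
          ← Matrix.mul_assoc M (M ^ t) (Vmat k), ← pow_succ' M t]
        abel
  -- summed matrix identity
  have hmat : ∑ t ∈ Finset.Icc 1 s, Vmat k * C ^ t
      = ∑ t ∈ Finset.Icc 1 s, M ^ t * Vmat k
        + ∑ ℓ ∈ Finset.Icc 1 s, M ^ ℓ * (E₀ * ∑ i ∈ Finset.range (s - ℓ + 1), C ^ i)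
        + ∑ ℓ ∈ Finset.range s, M ^ ℓ * (Fmat * ∑ i ∈ Finset.Icc 1 (s - ℓ), C ^ i) := by
    rw [Finset.sum_congr rfl fun t _ => key t, Finset.sum_add_distrib, Finset.sum_add_distrib,
      swapE (fun a b => M ^ a * E₀ * C ^ b) s, swapF (fun a b => M ^ a * Fmat * C ^ b) s]
    congr 1
    · congr 1
      refine Finset.sum_congr rfl fun ℓ _ => ?_
      simp only [Matrix.mul_sum, Matrix.mul_assoc]
    · refine Finset.sum_congr rfl fun ℓ _ => ?_
      simp only [Matrix.mul_sum, Matrix.mul_assoc]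
  -- taking the first column
  have hcol : ∀ (X : Matrix (Fin n) (Fin n) ℝ) (Y : Matrix (Fin n) (Fin q) ℝ),
      (fun i => (X * Y) i e0) = X.mulVec (fun i => Y i e0) := by
    intro X Y
    funext i
    simp [Matrix.mul_apply, Matrix.mulVec, dotProduct]
  have hcolVk : (fun i => Vmat k i e0) = v k := by
    funext i
    simp [hVmat, he0]
  have hsum : ∑ t ∈ Finset.Icc 1 s, (fun i => (Vmat k * C ^ t) i e0)
      = ∑ t ∈ Finset.Icc 1 s, (M ^ t).mulVec (v k)
        + ∑ ℓ ∈ Finset.Icc 1 s,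
            (M ^ ℓ).mulVec (fun i => (E₀ * ∑ i ∈ Finset.range (s - ℓ + 1), C ^ i) i e0)
        + ∑ ℓ ∈ Finset.range s,
            (M ^ ℓ).mulVec (fun i => (Fmat * ∑ i ∈ Finset.Icc 1 (s - ℓ), C ^ i) i e0) := by
    have hcol' : ∀ (X : Matrix (Fin n) (Fin n) ℝ) (Y : Matrix (Fin n) (Fin q) ℝ) (i : Fin n),
        (X * Y) i e0 = X.mulVec (fun i => Y i e0) i := fun X Y i => congrFun (hcol X Y) i
    funext i
    have h1 : (∑ t ∈ Finset.Icc 1 s, fun i => (Vmat k * C ^ t) i e0) i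
        = (∑ t ∈ Finset.Icc 1 s, Vmat k * C ^ t) i e0 := by
      rw [Finset.sum_apply, Matrix.sum_apply]
    rw [h1, hmat]
    simp only [Matrix.add_apply, Pi.add_apply, Finset.sum_apply, Matrix.sum_apply, hcol',
      hcolVk]
  -- mulVec of a sum of matrices
  have sum_mulVec : ∀ {ι : Type} (S : Finset ι) (A : ι → Matrix (Fin n) (Fin n) ℝ)
      (x : Fin n → ℝ), (∑ t ∈ S, A t).mulVec x = ∑ t ∈ S, (A t).mulVec x := by
    intro ι S A x
    funext i
    simp only [Matrix.mulVec, dotProduct, Matrix.sum_apply, Finset.sum_apply, Finset.sum_mul]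
    rw [Finset.sum_comm]
  have c1 : (1 : Matrix (Fin n) (Fin n) ℝ) + ∑ t ∈ Finset.Icc 1 s, M ^ t
      = M ^ s + ∑ ℓ ∈ Finset.range s, M ^ ℓ := by
    rw [sum_Icc_one_eq_range (fun t => M ^ t) s]
    have h' := Finset.sum_range_succ' (fun i => M ^ i) s
    have h'' := Finset.sum_range_succ (fun i => M ^ i) s
    simp only [pow_zero] at h' h''
    have hre : ∑ i ∈ Finset.range s, M ^ (1 + i) = ∑ i ∈ Finset.range s, M ^ (i + 1) :=
      Finset.sum_congr rfl fun i _ => by rw [add_comm]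
    rw [hre]
    calc (1 : Matrix (Fin n) (Fin n) ℝ) + ∑ i ∈ Finset.range s, M ^ (i + 1)
        = ∑ i ∈ Finset.range (s + 1), M ^ i := by rw [h']; abel
      _ = M ^ s + ∑ i ∈ Finset.range s, M ^ i := by rw [h'']; abel
  have c2 : ∑ t ∈ Finset.Icc 1 s, M ^ t = (∑ ℓ ∈ Finset.range s, M ^ ℓ) * M := by
    rw [sum_Icc_one_eq_range (fun t => M ^ t) s, Finset.sum_mul]
    exact Finset.sum_congr rfl fun i _ => by rw [add_comm, pow_succ]
  have hvk : v k = (z k - zstar) - (z (k - 1) - zstar) := by rw [hv k hkpos]; abel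
  have hhead : (z k - zstar) + ∑ t ∈ Finset.Icc 1 s, (M ^ t).mulVec (v k)
      = (M ^ s).mulVec (z k - zstar)
        + (∑ ℓ ∈ Finset.range s, M ^ ℓ).mulVec
            (-(M.mulVec (z (k - 1) - zstar) - (z k - zstar))) := by
    rw [hvk, ← sum_mulVec, neg_sub,
      Matrix.mulVec_sub (∑ t ∈ Finset.Icc 1 s, M ^ t),
      Matrix.mulVec_sub (∑ ℓ ∈ Finset.range s, M ^ ℓ),
      Matrix.mulVec_mulVec (z (k - 1) - zstar) (∑ ℓ ∈ Finset.range s, M ^ ℓ) M, ← c2]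
    have h1 : (1 : Matrix (Fin n) (Fin n) ℝ).mulVec (z k - zstar)
          + (∑ t ∈ Finset.Icc 1 s, M ^ t).mulVec (z k - zstar)
        = (M ^ s).mulVec (z k - zstar)
          + (∑ ℓ ∈ Finset.range s, M ^ ℓ).mulVec (z k - zstar) := by
      rw [← Matrix.add_mulVec, ← Matrix.add_mulVec, c1]
    rw [Matrix.one_mulVec] at h1
    rw [add_sub, add_sub, h1]
  have hdecomp : zbar - zstar
      = (M ^ s).mulVec (z k - zstar)
        + (∑ ℓ ∈ Finset.range s, M ^ ℓ).mulVec
            (-(M.mulVec (z (k - 1) - zstar) - (z k - zstar)))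
        + ∑ ℓ ∈ Finset.Icc 1 s,
            (M ^ ℓ).mulVec (fun i => (E₀ * ∑ i ∈ Finset.range (s - ℓ + 1), C ^ i) i e0)
        + ∑ ℓ ∈ Finset.range s,
            (M ^ ℓ).mulVec (fun i => (Fmat * ∑ i ∈ Finset.Icc 1 (s - ℓ), C ^ i) i e0) := by
    rw [hzbar]
    calc z k + (∑ t ∈ Finset.Icc 1 s, fun i => (Vmat k * C ^ t) i e0) - zstar
        = (z k - zstar) + ∑ t ∈ Finset.Icc 1 s, (fun i => (Vmat k * C ^ t) i e0) := by abel
      _ = ((z k - zstar) + ∑ t ∈ Finset.Icc 1 s, (M ^ t).mulVec (v k))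
          + ∑ ℓ ∈ Finset.Icc 1 s,
              (M ^ ℓ).mulVec (fun i => (E₀ * ∑ i ∈ Finset.range (s - ℓ + 1), C ^ i) i e0)
          + ∑ ℓ ∈ Finset.range s,
              (M ^ ℓ).mulVec (fun i => (Fmat * ∑ i ∈ Finset.Icc 1 (s - ℓ), C ^ i) i e0) := by
          rw [hsum]; abel
      _ = _ := by rw [hhead]
  rw [hdecomp]
  have tri : ∀ a b c d : Fin n → ℝ,
      euclNorm (a + b + c + d) ≤ euclNorm a + euclNorm b + euclNorm c + euclNorm d := by
    intro a b c d
    calc euclNorm (a + b + c + d) ≤ euclNorm (a + b + c) + euclNorm d := euclNorm_add_le _ _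
      _ ≤ (euclNorm (a + b) + euclNorm c) + euclNorm d := by
          have := euclNorm_add_le (a + b) c; linarith
      _ ≤ euclNorm a + euclNorm b + euclNorm c + euclNorm d := by
          have := euclNorm_add_le a b; linarith
  refine (tri _ _ _ _).trans ?_
  have hB : euclNorm ((∑ ℓ ∈ Finset.range s, M ^ ℓ).mulVec
        (-(M.mulVec (z (k - 1) - zstar) - (z k - zstar))))
      ≤ matOpNorm (∑ ℓ ∈ Finset.range s, M ^ ℓ)
          * euclNorm (M.mulVec (z (k - 1) - zstar) - (z k - zstar)) := by
    calc _ ≤ matOpNorm (∑ ℓ ∈ Finset.range s, M ^ ℓ)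
          * euclNorm (-(M.mulVec (z (k - 1) - zstar) - (z k - zstar))) :=
        euclNorm_mulVec_le _ _
      _ = _ := by rw [euclNorm_neg]
  have hCb : euclNorm (∑ ℓ ∈ Finset.Icc 1 s,
        (M ^ ℓ).mulVec (fun i => (E₀ * ∑ i ∈ Finset.range (s - ℓ + 1), C ^ i) i e0))
      ≤ ∑ ℓ ∈ Finset.Icc 1 s, matOpNorm (M ^ ℓ)
          * euclNorm (fun i => (E₀ * ∑ t ∈ Finset.range (s - ℓ + 1), C ^ t) i e0) :=
    (euclNorm_sum_le _ _).trans (Finset.sum_le_sum fun ℓ _ => euclNorm_mulVec_le _ _)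
  have hDb : euclNorm (∑ ℓ ∈ Finset.range s,
        (M ^ ℓ).mulVec (fun i => (Fmat * ∑ i ∈ Finset.Icc 1 (s - ℓ), C ^ i) i e0))
      ≤ ∑ ℓ ∈ Finset.range s, matOpNorm (M ^ ℓ)
          * euclNorm (fun i => (Fmat * ∑ t ∈ Finset.Icc 1 (s - ℓ), C ^ t) i e0) :=
    (euclNorm_sum_le _ _).trans (Finset.sum_le_sum fun ℓ _ => euclNorm_mulVec_le _ _)
  exact add_le_add (add_le_add (add_le_add le_rfl hB) hCb) hDb
end

section
/- Let M be a real symmetric n×n matrix all of whose eigenvalues lie in (−1, 1), let z* ∈ ℝⁿ, and let (z_j)_{j≥0} ⊂ ℝⁿ satisfy z_{j+1} − z* = M(z_j − z*) for all j. Set v_j = z_j − z_{j−1} for j ≥ 1. Fix q ≥ 1 and k ≥ q + 1, let c ∈ ℝ^q be a minimizer of c ↦ ‖Σ_{i=1}^{q} c_i v_{k−i} − v_k‖, assume Σ_{i=1}^{q} c_i ≠ 1, and set y = (z_{k−1} − Σ_{i=1}^{q} c_i z_{k−1−i})/(1 − Σ_{i=1}^{q} c_i). Let A = I − M, which is symmetric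 positive definite, and let A^{1/2} be its positive square root. Then: (i) A(y − z*) = (Σ_{i=1}^{q} c_i v_{k−i} − v_k)/(1 − Σ_{i=1}^{q} c_i), so ‖A(y − z*)‖ = ε_k/|1 − Σ_i c_i| where ε_k is the minimum fitting error; and (ii) for every real polynomial h of degree at most q with h(1) = 1, ‖A^{1/2}(y − z*)‖ ≤ (max over eigenvalues t of M of |h(t)|) · ‖A^{1/2}(z_{k−q−1} − z*)‖. -/
open Matrix Polynomial

lemma euclNorm_eq_sqrt_dot {n : ℕ} (x : Fin n → ℝ) : euclNorm x = Real.sqrt (x ⬝ᵥ x) := by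
  simp [euclNorm, dotProduct, sq]
lemma dot_self_nonneg {n : ℕ} (x : Fin n → ℝ) : 0 ≤ x ⬝ᵥ x :=
  Finset.sum_nonneg fun i _ => mul_self_nonneg _
lemma euclNorm_nonneg {n : ℕ} (x : Fin n → ℝ) : 0 ≤ euclNorm x := Real.sqrt_nonneg _
lemma sq_euclNorm {n : ℕ} (x : Fin n → ℝ) : euclNorm x ^ 2 = x ⬝ᵥ x := by
  rw [euclNorm_eq_sqrt_dot, Real.sq_sqrt (dot_self_nonneg x)]
lemma euclNorm_smul {n : ℕ} (a : ℝ) (x : Fin n → ℝ) :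
    euclNorm (a • x) = |a| * euclNorm x := by
  simp only [euclNorm, Pi.smul_apply, smul_eq_mul, mul_pow, ← Finset.mul_sum]
  rw [Real.sqrt_mul (sq_nonneg a), Real.sqrt_sq_eq_abs]
lemma dot_self_pos {n : ℕ} (x : Fin n → ℝ) (hx : x ≠ 0) : 0 < x ⬝ᵥ x := by
  obtain ⟨i, hi⟩ := Function.ne_iff.mp hx
  exact Finset.sum_pos' (fun j _ => mul_self_nonneg _)
    ⟨i, Finset.mem_univ i, mul_self_pos.mpr hi⟩
lemma dot_le_euclNorm_mul {n : ℕ} (x y : Fin n → ℝ) :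
    x ⬝ᵥ y ≤ euclNorm x * euclNorm y := by
  have h := real_inner_le_norm
    ((WithLp.equiv 2 (Fin n → ℝ)).symm x) ((WithLp.equiv 2 (Fin n → ℝ)).symm y)
  have h1 : (inner ℝ ((WithLp.equiv 2 (Fin n → ℝ)).symm x) ((WithLp.equiv 2 (Fin n → ℝ)).symm y) : ℝ)
      = x ⬝ᵥ y := by
    simp [PiLp.inner_apply, dotProduct, mul_comm]
  have h2 : ‖(WithLp.equiv 2 (Fin n → ℝ)).symm x‖ = euclNorm x := by
    simp [EuclideanSpace.norm_eq, euclNorm, sq_abs]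
  have h3 : ‖(WithLp.equiv 2 (Fin n → ℝ)).symm y‖ = euclNorm y := by
    simp [EuclideanSpace.norm_eq, euclNorm, sq_abs]
  rwa [h1, h2, h3] at h
lemma symm_dot_shift {n : ℕ} (S : Matrix (Fin n) (Fin n) ℝ) (hS : Sᵀ = S)
    (x y : Fin n → ℝ) : (S *ᵥ x) ⬝ᵥ y = x ⬝ᵥ (S *ᵥ y) := by
  rw [dotProduct_mulVec, ← mulVec_transpose, hS, dotProduct_comm, dotProduct_mulVec,
    ← mulVec_transpose, hS, dotProduct_comm]

lemma residual_orth {n q : ℕ} (w : Fin q → (Fin n → ℝ)) (t : Fin n → ℝ) (c : Fin q → ℝ)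
    (hc : ∀ c' : Fin q → ℝ,
      euclNorm (∑ i, c i • w i - t) ≤ euclNorm (∑ i, c' i • w i - t)) (i₀ : Fin q) :
    (∑ i, c i • w i - t) ⬝ᵥ w i₀ = 0 := by
  set R := ∑ i, c i • w i - t with hR
  have key : ∀ ε : ℝ, R ⬝ᵥ R ≤ (R + ε • w i₀) ⬝ᵥ (R + ε • w i₀) := by
    intro ε
    have h := hc (Function.update c i₀ (c i₀ + ε))
    have hterm : ∀ i, Function.update c i₀ (c i₀ + ε) i • w i
        = c i • w i + (if i = i₀ then ε • w i₀ else 0) := by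
      intro i
      by_cases hi : i = i₀
      · subst hi; simp [Function.update_self, add_smul]
      · simp [Function.update_of_ne hi, hi]
    have hsum : ∑ i, Function.update c i₀ (c i₀ + ε) i • w i - t = R + ε • w i₀ := by
      simp only [hterm, Finset.sum_add_distrib, Finset.sum_ite_eq' Finset.univ i₀,
        Finset.mem_univ, if_true, hR]
      abel
    rw [hsum, euclNorm_eq_sqrt_dot, euclNorm_eq_sqrt_dot] at h
    have h2 := pow_le_pow_left₀ (Real.sqrt_nonneg _) h 2
    rwa [Real.sq_sqrt (dot_self_nonneg _), Real.sq_sqrt (dot_self_nonneg _)] at h2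
  set a := R ⬝ᵥ w i₀ with ha
  set b := w i₀ ⬝ᵥ w i₀ with hb
  have expand : ∀ ε : ℝ, (R + ε • w i₀) ⬝ᵥ (R + ε • w i₀)
      = R ⬝ᵥ R + 2 * ε * a + ε ^ 2 * b := by
    intro ε
    simp only [add_dotProduct, dotProduct_add, smul_dotProduct, dotProduct_smul, smul_eq_mul]
    have hcomm : w i₀ ⬝ᵥ R = R ⬝ᵥ w i₀ := dotProduct_comm _ _
    ring_nf
    rw [hcomm]
    ring
  have hb0 : 0 ≤ b := dot_self_nonneg _
  have h2 : ∀ ε : ℝ, 0 ≤ 2 * ε * a + ε ^ 2 * b := by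
    intro ε; have := key ε; rw [expand ε] at this; linarith
  have h3 := h2 (-a / (b + 1))
  have hb1 : (0:ℝ) < b + 1 := by linarith
  have hbne : b + 1 ≠ 0 := ne_of_gt hb1
  have h4 := mul_nonneg h3 (sq_nonneg (b+1))
  have h5 : (2 * (-a / (b + 1)) * a + (-a / (b + 1)) ^ 2 * b) * (b+1)^2
      = -2*a^2*(b+1) + a^2*b := by field_simp
  rw [h5] at h4
  nlinarith [sq_nonneg a]

-- eigenvalues of a real symmetric matrix are roots of the charpoly
lemma eig_isRoot {n : ℕ} (M : Matrix (Fin n) (Fin n) ℝ) (hM : M.IsHermitian) (i : Fin n) :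
    M.charpoly.IsRoot (hM.eigenvalues i) := by
  have hs := hM.eigenvalues_mem_spectrum_real i
  set t := hM.eigenvalues i
  rw [spectrum.mem_iff] at hs
  have hdet : det (algebraMap ℝ (Matrix (Fin n) (Fin n) ℝ) t - M) = 0 := by
    by_contra hd
    exact hs ((isUnit_iff_isUnit_det _).mpr (Ne.isUnit hd))
  have : M.charpoly.eval t = det (algebraMap ℝ (Matrix (Fin n) (Fin n) ℝ) t - M) := by
    rw [Matrix.charpoly]
    rw [← coe_evalRingHom, RingHom.map_det]
    congr 1
    ext i j
    by_cases hij : i = j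
    · subst hij; simp [charmatrix_apply_eq, algebraMap_matrix_apply]
    · simp [charmatrix_apply_ne _ _ _ hij, algebraMap_matrix_apply, hij]
  rwa [Polynomial.IsRoot, this]

lemma matrix_aeval_conj {n : ℕ} (U : Matrix (Fin n) (Fin n) ℝ) (h1 : star U * U = 1)
    (h2 : U * star U = 1) (d : Fin n → ℝ) (p : ℝ[X]) :
    aeval (U * diagonal d * star U) p
      = U * diagonal (fun i => p.eval (d i)) * star U := by
  induction p using Polynomial.induction_on' with
  | add p q hp hq =>
    rw [map_add, hp, hq]
    have hD : (diagonal fun i => (p + q).eval (d i))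
        = (diagonal fun i => p.eval (d i)) + (diagonal fun i => q.eval (d i)) := by
      rw [diagonal_add]; congr 1; funext i; simp
    rw [hD, Matrix.mul_add, Matrix.add_mul]
  | monomial k a =>
    have hpow : ∀ j : ℕ, (U * diagonal d * star U) ^ j = U * (diagonal d) ^ j * star U := by
      intro j
      induction j with
      | zero => simpa using h2.symm
      | succ j ih =>
        rw [pow_succ, pow_succ, ih]
        calc U * diagonal d ^ j * star U * (U * diagonal d * star U)
            = U * diagonal d ^ j * (star U * U) * (diagonal d * star U) := by
              simp only [mul_assoc]
          _ = U * (diagonal d ^ j * diagonal d) * star U := by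
              rw [h1, mul_one]; simp only [mul_assoc]
    rw [aeval_monomial, hpow]
    have hd : (diagonal fun i => (monomial k a).eval (d i)) = a • (diagonal d) ^ k := by
      have hfun : (fun i => eval (d i) (monomial k a)) = a • (d ^ k) := by
        funext i; simp [eval_monomial]
      rw [hfun, diagonal_pow, ← diagonal_smul]
    rw [hd, Algebra.algebraMap_eq_smul_one, smul_one_mul, Matrix.mul_smul, Matrix.smul_mul]

lemma euclNorm_mulVec_orth {n : ℕ} (U : Matrix (Fin n) (Fin n) ℝ) (h1 : Uᵀ * U = 1)
    (w : Fin n → ℝ) : euclNorm (U *ᵥ w) = euclNorm w := by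
  rw [euclNorm_eq_sqrt_dot, euclNorm_eq_sqrt_dot]
  congr 1
  rw [dotProduct_mulVec, ← mulVec_transpose, mulVec_mulVec, h1, one_mulVec]

lemma euclNorm_diagonal_le {n : ℕ} (g : Fin n → ℝ) (bound : ℝ) (hb : 0 ≤ bound)
    (hg : ∀ i, |g i| ≤ bound) (w : Fin n → ℝ) :
    euclNorm (diagonal g *ᵥ w) ≤ bound * euclNorm w := by
  have h1 : euclNorm (diagonal g *ᵥ w) = Real.sqrt (∑ i, (g i * w i) ^ 2) := by
    unfold euclNorm
    congr 1
    refine Finset.sum_congr rfl fun i _ => ?_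
    rw [mulVec_diagonal]
  rw [h1]
  have h2 : ∑ i, (g i * w i) ^ 2 ≤ bound ^ 2 * ∑ i, w i ^ 2 := by
    rw [Finset.mul_sum]
    refine Finset.sum_le_sum fun i _ => ?_
    rw [mul_pow, ← sq_abs (g i)]
    exact mul_le_mul_of_nonneg_right (pow_le_pow_left₀ (abs_nonneg _) (hg i) 2) (sq_nonneg _)
  calc Real.sqrt (∑ i, (g i * w i) ^ 2) ≤ Real.sqrt (bound ^ 2 * ∑ i, w i ^ 2) :=
        Real.sqrt_le_sqrt h2
    _ = bound * euclNorm w := by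
        rw [Real.sqrt_mul (sq_nonneg _), Real.sqrt_sq hb]; rfl

/-- spectral bound: `‖h(M) x‖ ≤ bound ‖x‖` for symmetric `M` when `|h|` is
bounded by `bound` on the roots of the charpoly of `M`. -/
lemma euclNorm_aeval_mulVec_le {n : ℕ} (M : Matrix (Fin n) (Fin n) ℝ)
    (hM : M.IsHermitian) (h : ℝ[X]) (bound : ℝ) (hb : 0 ≤ bound)
    (hbd : ∀ t : ℝ, M.charpoly.IsRoot t → |h.eval t| ≤ bound) (x : Fin n → ℝ) :
    euclNorm (aeval M h *ᵥ x) ≤ bound * euclNorm x := by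
  set U : Matrix (Fin n) (Fin n) ℝ := (hM.eigenvectorUnitary : Matrix (Fin n) (Fin n) ℝ)
  have hU1 : star U * U = 1 := mem_unitaryGroup_iff'.mp hM.eigenvectorUnitary.2
  have hU2 : U * star U = 1 := mem_unitaryGroup_iff.mp hM.eigenvectorUnitary.2
  have hst : star U = Uᵀ := by
    rw [Matrix.star_eq_conjTranspose, conjTranspose_eq_transpose_of_trivial]
  have hspec : M = U * diagonal hM.eigenvalues * star U := by
    have := hM.spectral_theorem
    simpa using this
  have haev : aeval M h = U * diagonal (fun i => h.eval (hM.eigenvalues i)) * star U := by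
    have hh := matrix_aeval_conj U hU1 hU2 hM.eigenvalues h
    rw [← hspec] at hh
    exact hh
  rw [haev]
  rw [← mulVec_mulVec, ← mulVec_mulVec]
  rw [euclNorm_mulVec_orth U (by rw [← hst]; exact hU1)]
  calc euclNorm (diagonal (fun i => h.eval (hM.eigenvalues i)) *ᵥ (star U *ᵥ x))
      ≤ bound * euclNorm (star U *ᵥ x) := by
        refine euclNorm_diagonal_le _ bound hb (fun i => hbd _ ?_) _
        exact eig_isRoot M hM i
    _ = bound * euclNorm x := by
        rw [hst]
        rw [euclNorm_mulVec_orth Uᵀ (by rw [transpose_transpose, ← hst]; exact hU2)]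

lemma sum_mulVec_distrib {n : ℕ} {ι : Type*} [DecidableEq ι] (s : Finset ι)
    (f : ι → Matrix (Fin n) (Fin n) ℝ) (x : Fin n → ℝ) :
    (∑ i ∈ s, f i) *ᵥ x = ∑ i ∈ s, (f i) *ᵥ x := by
  induction s using Finset.induction with
  | empty => simp [mulVec]
  | insert _ _ hnotmem ih =>
    rw [Finset.sum_insert hnotmem, Finset.sum_insert hnotmem, add_mulVec, ih]

lemma mulVec_sum_distrib {n : ℕ} {ι : Type*} [DecidableEq ι] (s : Finset ι)
    (A : Matrix (Fin n) (Fin n) ℝ) (g : ι → Fin n → ℝ) :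
    A *ᵥ (∑ i ∈ s, g i) = ∑ i ∈ s, A *ᵥ g i := by
  induction s using Finset.induction with
  | empty => simp
  | insert _ _ hnotmem ih =>
    rw [Finset.sum_insert hnotmem, Finset.sum_insert hnotmem, mulVec_add, ih]

lemma dot_sum_distrib {n : ℕ} {ι : Type*} [DecidableEq ι] (x : Fin n → ℝ) (s : Finset ι)
    (g : ι → Fin n → ℝ) : x ⬝ᵥ (∑ i ∈ s, g i) = ∑ i ∈ s, x ⬝ᵥ g i := by
  induction s using Finset.induction with
  | empty => simp
  | insert _ _ hnotmem ih =>
    rw [Finset.sum_insert hnotmem, Finset.sum_insert hnotmem, dotProduct_add, ih]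

/-- Non-asymptotic acceleration estimate for the MPE update `y` built from
`z_{k−q−1}, …, z_{k−1}` with least-squares coefficients `c`: with `A = I − M`
symmetric positive definite and `B = A^{1/2}` its positive square root,
`A(y − z*)` equals the normalized fitting residual, and for every polynomial `h`
of degree at most `q` with `h(1) = 1`,
`‖A^{1/2}(y − z*)‖ ≤ (max_{t ∈ λ(M)} |h(t)|) ‖A^{1/2}(z_{k−q−1} − z*)‖`. -/
theorem mpe_nonasymptotic_estimate
    (n : ℕ) (M : Matrix (Fin n) (Fin n) ℝ) (hM : M.IsSymm)
    (hspec : ∀ t : ℝ, M.charpoly.IsRoot t → t ∈ Set.Ioo (-1 : ℝ) 1)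
    (zstar : Fin n → ℝ) (z : ℕ → (Fin n → ℝ))
    (hz : ∀ j, z (j + 1) - zstar = M.mulVec (z j - zstar))
    (v : ℕ → (Fin n → ℝ)) (hv : ∀ j, 1 ≤ j → v j = z j - z (j - 1))
    (q : ℕ) (hq : 1 ≤ q) (k : ℕ) (hk : q + 1 ≤ k)
    (c : Fin q → ℝ)
    (hc : ∀ c' : Fin q → ℝ,
      euclNorm (∑ i : Fin q, c i • v (k - ((i : ℕ) + 1)) - v k)
        ≤ euclNorm (∑ i : Fin q, c' i • v (k - ((i : ℕ) + 1)) - v k))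
    (hsum : ∑ i, c i ≠ 1)
    (y : Fin n → ℝ)
    (hy : y = (1 - ∑ i, c i)⁻¹ •
      (z (k - 1) - ∑ i : Fin q, c i • z (k - 1 - ((i : ℕ) + 1))))
    (B : Matrix (Fin n) (Fin n) ℝ) (hBpos : B.PosDef) (hBsq : B * B = 1 - M) :
    (1 - M).PosDef ∧
    (1 - M).mulVec (y - zstar) =
      (1 - ∑ i, c i)⁻¹ • (∑ i : Fin q, c i • v (k - ((i : ℕ) + 1)) - v k) ∧
    euclNorm ((1 - M).mulVec (y - zstar)) =
      euclNorm (∑ i : Fin q, c i • v (k - ((i : ℕ) + 1)) - v k) / |1 - ∑ i, c i| ∧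
    (∀ h : Polynomial ℝ, h.natDegree ≤ q → h.eval 1 = 1 →
      ∀ bound : ℝ, (∀ t : ℝ, M.charpoly.IsRoot t → |h.eval t| ≤ bound) →
        euclNorm (B.mulVec (y - zstar))
          ≤ bound * euclNorm (B.mulVec (z (k - q - 1) - zstar))) := by
  classical
  have h1s : (1:ℝ) - ∑ i, c i ≠ 0 := sub_ne_zero.mpr (Ne.symm hsum)
  set s : ℝ := ∑ i, c i with hs
  have hMh : M.IsHermitian := by
    rwa [Matrix.IsHermitian, conjTranspose_eq_transpose_of_trivial]
  have hBh : B.IsHermitian := hBpos.isHermitian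
  have hBt : Bᵀ = B := by
    rw [← conjTranspose_eq_transpose_of_trivial]; exact hBh
  have hBinj : ∀ x : Fin n → ℝ, x ≠ 0 → B *ᵥ x ≠ 0 := by
    intro x hx hBx
    have hinj := Matrix.mulVec_injective_iff_isUnit.mpr hBpos.isUnit
    exact hx (hinj (by rw [hBx, mulVec_zero]))
  -- Part 1
  have hpos : (1 - M).PosDef := by
    refine posDef_iff_dotProduct_mulVec.mpr ⟨Matrix.isHermitian_one.sub hMh, fun x hx => ?_⟩
    have hqf : star x ⬝ᵥ ((1 - M) *ᵥ x) = (B *ᵥ x) ⬝ᵥ (B *ᵥ x) := by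
      have hstx : star x = x := by funext i; simp
      rw [hstx, ← hBsq, ← mulVec_mulVec, ← symm_dot_shift B hBt]
    rw [hqf]
    exact dot_self_pos _ (hBinj x hx)
  -- index normalization
  obtain ⟨m, rfl⟩ : ∃ m, k = m + q + 1 := ⟨k - q - 1, by omega⟩
  set e : ℕ → (Fin n → ℝ) := fun j => z j - zstar with he
  have hemz : ∀ j, z j = e j + zstar := fun j => by simp [he]
  have hepow : ∀ t, e (m + t) = (M ^ t) *ᵥ e m := by
    intro t
    induction t with
    | zero => simp
    | succ t ih =>
      have hmt : m + (t + 1) = (m + t) + 1 := by omega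
      rw [hmt]
      show z ((m+t)+1) - zstar = _
      rw [hz (m+t)]
      show M *ᵥ e (m + t) = M ^ (t+1) *ᵥ e m
      rw [ih, mulVec_mulVec, ← pow_succ']
  have hvE : ∀ t, v (m + t + 1) = ((M - 1) * M ^ t) *ᵥ e m := by
    intro t
    rw [hv _ (by omega)]
    have h1 : m + t + 1 - 1 = m + t := by omega
    rw [h1]
    have h2 : z (m + t + 1) - z (m + t) = e (m + (t+1)) - e (m + t) := by
      have hmt : m + t + 1 = m + (t + 1) := by omega
      rw [hmt]
      show z (m + (t+1)) - z (m+t) = (z (m + (t+1)) - zstar) - (z (m+t) - zstar)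
      abel
    rw [h2, hepow, hepow, sub_mul, one_mul, sub_mulVec, pow_succ']
  have hvki : ∀ i : Fin q,
      v (m + q + 1 - ((i:ℕ) + 1)) = ((M - 1) * M ^ (q - 1 - (i:ℕ))) *ᵥ e m := by
    intro i
    have hidx : m + q + 1 - ((i:ℕ) + 1) = m + (q - 1 - (i:ℕ)) + 1 := by omega
    rw [hidx, hvE]
  have hvk : v (m + q + 1) = ((M - 1) * M ^ q) *ᵥ e m := hvE q
  set W : Fin n → ℝ := (M ^ q) *ᵥ e m - ∑ i : Fin q, c i • ((M ^ (q - 1 - (i:ℕ))) *ᵥ e m)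
    with hW
  set Rv : Fin n → ℝ := ∑ i : Fin q, c i • v (m + q + 1 - ((i:ℕ) + 1)) - v (m + q + 1) with hRv
  have hRvW : Rv = (1 - M) *ᵥ W := by
    rw [hRv, hW, mulVec_sub, hvk]
    rw [mulVec_sum_distrib]
    have hterm : ∀ i : Fin q, c i • v (m + q + 1 - ((i:ℕ) + 1))
        = -((1 - M) *ᵥ (c i • ((M ^ (q - 1 - (i:ℕ))) *ᵥ e m))) := by
      intro i
      rw [hvki i, mulVec_smul, mulVec_mulVec]
      have hneg : (M - 1) * M ^ (q - 1 - (i:ℕ)) = -((1 - M) * M ^ (q - 1 - (i:ℕ))) := by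
        rw [← neg_mul, neg_sub]
      rw [hneg, neg_mulVec, smul_neg]
    simp only [hterm]
    have hneg2 : (M - 1) * M ^ q = -((1 - M) * M ^ q) := by rw [← neg_mul, neg_sub]
    rw [hneg2, neg_mulVec, mulVec_mulVec, Finset.sum_neg_distrib]
    abel
  -- y - zstar
  have hu : y - zstar = (1 - s)⁻¹ • W := by
    rw [hy]
    have hi1 : m + q + 1 - 1 = m + q := by omega
    rw [hi1]
    have hsum2 : ∑ i : Fin q, c i • z (m + q - ((i:ℕ) + 1))
        = ∑ i : Fin q, c i • ((M ^ (q - 1 - (i:ℕ))) *ᵥ e m + zstar) := by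
      refine Finset.sum_congr rfl fun i _ => ?_
      have hi2 : m + q - ((i:ℕ) + 1) = m + (q - 1 - (i:ℕ)) := by omega
      rw [hi2, hemz, hepow]
    rw [hsum2, hemz (m + q), hepow]
    have expand : (M ^ q) *ᵥ e m + zstar
          - ∑ i : Fin q, c i • ((M ^ (q - 1 - (i:ℕ))) *ᵥ e m + zstar)
        = W + (1 - s) • zstar := by
      rw [hW]
      simp only [smul_add, Finset.sum_add_distrib, ← Finset.sum_smul, ← hs, sub_smul, one_smul]
      abel
    rw [expand, smul_add, smul_smul, inv_mul_cancel₀ h1s, one_smul, add_sub_cancel_right]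
  have part2 : (1 - M) *ᵥ (y - zstar) = (1 - s)⁻¹ • Rv := by
    rw [hu, mulVec_smul, hRvW]
  have part3 : euclNorm ((1 - M) *ᵥ (y - zstar)) = euclNorm Rv / |1 - s| := by
    rw [part2, euclNorm_smul, abs_inv, div_eq_mul_inv, mul_comm]
  refine ⟨hpos, part2, part3, ?_⟩
  -- Part 4
  intro h hdeg hh1 bound hbd
  by_cases hn : n = 0
  · subst hn
    simp [euclNorm]
  have hnpos : 0 < n := Nat.pos_of_ne_zero hn
  have hb0 : 0 ≤ bound :=
    le_trans (abs_nonneg _) (hbd _ (eig_isRoot M hMh ⟨0, hnpos⟩))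
  set pt : ℝ[X] := X ^ q - ∑ i : Fin q, C (c i) * X ^ (q - 1 - (i:ℕ)) with hpt
  have haevterm : ∀ i : Fin q,
      aeval M (C (c i) * X ^ (q - 1 - (i:ℕ))) = c i • M ^ (q - 1 - (i:ℕ)) := by
    intro i
    rw [_root_.map_mul, aeval_C, map_pow, aeval_X, ← Algebra.smul_def]
  have haevp : (aeval M pt) *ᵥ e m = W := by
    rw [hpt, map_sub, map_pow, aeval_X, map_sum, sub_mulVec, sum_mulVec_distrib, hW]
    congr 1
    refine Finset.sum_congr rfl fun i _ => ?_
    rw [haevterm i, smul_mulVec]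
  have hpteval1 : pt.eval 1 = 1 - s := by
    rw [hpt]
    simp [eval_finset_sum, hs]
  have hdvd : X - C (1:ℝ) ∣ pt - C (1 - s) * h := by
    rw [dvd_iff_isRoot]
    simp [IsRoot, hpteval1, hh1]
  obtain ⟨g, hg⟩ := hdvd
  have hgdeg : g.natDegree < q := by
    by_cases hg0 : g = 0
    · simp [hg0]; omega
    · have hXg : ((X - C (1:ℝ)) * g).natDegree = 1 + g.natDegree := by
        rw [natDegree_mul (X_sub_C_ne_zero 1) hg0, natDegree_X_sub_C]
      have hle : (pt - C (1 - s) * h).natDegree ≤ q := by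
        refine le_trans (natDegree_sub_le _ _) (max_le ?_ ?_)
        · rw [hpt]
          refine le_trans (natDegree_sub_le _ _) (max_le ?_ ?_)
          · simp
          · refine natDegree_sum_le_of_forall_le _ _ fun i _ => ?_
            refine le_trans (natDegree_C_mul_le _ _) ?_
            simp only [natDegree_X_pow]
            omega
        · exact le_trans (natDegree_C_mul_le _ _) hdeg
      rw [hg, hXg] at hle
      omega
  have horth : ∀ i : Fin q, Rv ⬝ᵥ v (m + q + 1 - ((i:ℕ)+1)) = 0 := fun i =>
    residual_orth _ _ c hc i
  have horthj : ∀ j, j < q → Rv ⬝ᵥ (((M - 1) * M ^ j) *ᵥ e m) = 0 := by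
    intro j hj
    have hi := horth ⟨q - 1 - j, by omega⟩
    rw [hvki ⟨q - 1 - j, by omega⟩] at hi
    have hidx : q - 1 - (q - 1 - j) = j := by omega
    rwa [hidx] at hi
  have horthg : Rv ⬝ᵥ (((M - 1) * aeval M g) *ᵥ e m) = 0 := by
    rw [aeval_eq_sum_range' hgdeg, Finset.mul_sum]
    simp only [mul_smul_comm]
    rw [sum_mulVec_distrib]
    rw [dot_sum_distrib]
    refine Finset.sum_eq_zero fun j hj => ?_
    rw [smul_mulVec, dotProduct_smul, horthj j (Finset.mem_range.mp hj), smul_zero]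
  set F : Fin n → ℝ := aeval M h *ᵥ e m with hF
  set G : Fin n → ℝ := ((M - 1) * aeval M g) *ᵥ e m with hG
  have hWd : W = (1 - s) • F + G := by
    have hpt2 : pt = (X - C 1) * g + C (1 - s) * h := by
      rw [← hg]; ring
    rw [← haevp, hpt2, map_add, _root_.map_mul, _root_.map_mul, map_sub, aeval_X, aeval_C, aeval_C]
    rw [add_mulVec, ← Algebra.smul_def, smul_mulVec]
    rw [add_comm, _root_.map_one]
  have hu2 : y - zstar = F + (1 - s)⁻¹ • G := by
    rw [hu, hWd, smul_add, smul_smul, inv_mul_cancel₀ h1s, one_smul]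
  have key1 : euclNorm (B *ᵥ (y - zstar)) ^ 2 = (B *ᵥ F) ⬝ᵥ (B *ᵥ (y - zstar)) := by
    rw [sq_euclNorm, symm_dot_shift B hBt, mulVec_mulVec, hBsq, part2, dotProduct_smul]
    have hdot : (y - zstar) ⬝ᵥ Rv = F ⬝ᵥ Rv := by
      rw [hu2, add_dotProduct, smul_dotProduct]
      rw [dotProduct_comm G Rv, horthg]
      simp
    rw [hdot, ← dotProduct_smul, ← part2, ← hBsq, ← mulVec_mulVec, ← symm_dot_shift B hBt]
  have key2 : euclNorm (B *ᵥ (y - zstar)) ≤ euclNorm (B *ᵥ F) := by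
    by_cases h0 : euclNorm (B *ᵥ (y - zstar)) = 0
    · rw [h0]; exact euclNorm_nonneg _
    · have hpos' : 0 < euclNorm (B *ᵥ (y - zstar)) :=
        lt_of_le_of_ne (euclNorm_nonneg _) (Ne.symm h0)
      have hcs := dot_le_euclNorm_mul (B *ᵥ F) (B *ᵥ (y - zstar))
      nlinarith [key1]
  have key3 : B *ᵥ F = aeval M h *ᵥ (B *ᵥ e m) := by
    have hBM : Commute B M := by
      have hM' : M = 1 - B * B := by rw [hBsq]; exact (sub_sub_cancel 1 M).symm
      rw [hM']
      exact (Commute.one_right B).sub_right ((Commute.refl B).mul_right (Commute.refl B))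
    have hcomm : Commute B (aeval M h) := by
      rw [Polynomial.aeval_eq_sum_range]
      exact Commute.sum_right _ _ _ fun i _ => (hBM.pow_right i).smul_right _
    rw [hF, mulVec_mulVec, hcomm.eq, ← mulVec_mulVec]
  calc euclNorm (B *ᵥ (y - zstar)) ≤ euclNorm (B *ᵥ F) := key2
    _ = euclNorm (aeval M h *ᵥ (B *ᵥ e m)) := by rw [key3]
    _ ≤ bound * euclNorm (B *ᵥ e m) := euclNorm_aeval_mulVec_le M hMh h bound hb0 hbd _
    _ = bound * euclNorm (B *ᵥ (z (m + q + 1 - q - 1) - zstar)) := by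
        rw [show m + q + 1 - q - 1 = m from by omega]
end
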